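/- Let P1 and P2 be probability measures on a common measurable space and let ε ≥ 0. If P1 and P2 are (ε,0)-close, i.e. P1(A) ≤ e^ε·P2(A) and P2(A) ≤ e^ε·P1(A) for every measurable set A, then the Kullback–Leibler divergences satisfy D(P1‖P2) ≤ min{ε, ε²} and D(P2‖P1) ≤ min{ε, ε²} (measured in nats). -/

import Mathlib

open MeasureTheory Real
open scoped ENNReal Classical

/-- The Kullback–Leibler divergence `D(P‖Q)` (in nats), as an extended nonnegative real:
it is `∫ log (dP/dQ) dP` when `P ≪ Q` and the log-likelihood ratio is integrable,
and `∞` otherwise. -/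
noncomputable def klDiv {Ω : Type*} [MeasurableSpace Ω] (P Q : Measure Ω) : ℝ≥0∞ :=
  if P ≪ Q ∧ Integrable (llr P Q) P then ENNReal.ofReal (∫ x, llr P Q x ∂P) else ⊤

/-!
Closeness forces `e^{-ε} ≤ r ≤ e^ε` `Q`-a.e. for `r = dP/dQ`, so `|log r| ≤ ε` and
`D(P‖Q) = ∫ log r dP ≤ ε`. For the quadratic bound write `D(P‖Q) = ∫ r log r dQ`: the convex
function `x log x` lies below its chord on `[e^{-ε}, e^ε]`, and since `∫ r dQ = 1` this gives
`D(P‖Q) ≤ ε (e^ε - 1) / (e^ε + 1) = ε tanh (ε / 2) ≤ ε²`.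
-/

theorem ConvexOn.le_chord {f : ℝ → ℝ} {a b x : ℝ} (hf : ConvexOn ℝ (Set.Icc a b) f)
    (hx : x ∈ Set.Icc a b) : (b - a) * f x ≤ (b - x) * f a + (x - a) * f b := by
  obtain ⟨hax, hxb⟩ := hx
  rcases hax.eq_or_lt with rfl | hax
  · simp
  rcases hxb.eq_or_lt with rfl | hxb
  · simp
  have hab := (hax.trans hxb).le
  exact hf.secant_mono_aux1 (Set.left_mem_Icc.2 hab) (Set.right_mem_Icc.2 hab) hax hxb

theorem ConvexOn.integral_comp_le_chord {Ω : Type*} [MeasurableSpace Ω] {μ : Measure Ω}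
    [IsProbabilityMeasure μ] {f : ℝ → ℝ} {a b : ℝ} (hf : ConvexOn ℝ (Set.Icc a b) f)
    {g : Ω → ℝ} (hg : ∀ᵐ x ∂μ, g x ∈ Set.Icc a b) (hgi : Integrable g μ)
    (hfgi : Integrable (fun x ↦ f (g x)) μ) :
    (b - a) * ∫ x, f (g x) ∂μ ≤ (b - ∫ x, g x ∂μ) * f a + (∫ x, g x ∂μ - a) * f b := by
  have hlin : ∫ x, ((b - g x) * f a + (g x - a) * f b) ∂μ
      = (b - ∫ x, g x ∂μ) * f a + (∫ x, g x ∂μ - a) * f b := by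
    rw [integral_add, integral_mul_const, integral_mul_const, integral_sub, integral_sub]
    all_goals first | simp | fun_prop
  rw [← hlin, ← integral_const_mul]
  exact integral_mono_ae (hfgi.const_mul _) (by fun_prop) (hg.mono fun x hx ↦ hf.le_chord hx)

section

variable {Ω : Type*} [MeasurableSpace Ω] {P Q : Measure Ω}

lemma klDiv_of_integrable (hPQ : P ≪ Q) (hint : Integrable (llr P Q) P) :
    klDiv P Q = ENNReal.ofReal (∫ x, llr P Q x ∂P) :=
  if_pos ⟨hPQ, hint⟩

lemma MeasureTheory.Measure.rnDeriv_le_of_le_smul [SigmaFinite Q] {c : ℝ≥0∞}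
    (h : P ≤ c • Q) : P.rnDeriv Q ≤ᵐ[Q] fun _ ↦ c := by
  refine ae_le_of_forall_setLIntegral_le_of_sigmaFinite (P.measurable_rnDeriv Q)
    fun s hs _ ↦ ?_
  calc ∫⁻ x in s, P.rnDeriv Q x ∂Q ≤ P s := Measure.setLIntegral_rnDeriv_le s
    _ ≤ c * Q s := h s
    _ = ∫⁻ _ in s, c ∂Q := by rw [setLIntegral_const]

lemma MeasureTheory.Measure.inv_le_rnDeriv_of_le_smul [SigmaFinite P] [SigmaFinite Q]
    {c : ℝ≥0∞} (h : Q ≤ c • P) : ∀ᵐ x ∂Q, c⁻¹ ≤ P.rnDeriv Q x := by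
  have hQP : Q ≪ P := Measure.absolutelyContinuous_of_le_smul h
  filter_upwards [hQP.ae_le (Measure.rnDeriv_le_of_le_smul h), Measure.inv_rnDeriv hQP]
    with x hle hinv
  rw [← hinv, Pi.inv_apply]
  exact ENNReal.inv_le_inv.2 hle

lemma toReal_rnDeriv_mem_Icc_of_le_smul [SigmaFinite P] [SigmaFinite Q] {c : ℝ} (hc : 0 < c)
    (hPQ : P ≤ ENNReal.ofReal c • Q) (hQP : Q ≤ ENNReal.ofReal c • P) :
    ∀ᵐ x ∂Q, (P.rnDeriv Q x).toReal ∈ Set.Icc c⁻¹ c := by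
  filter_upwards [Measure.rnDeriv_le_of_le_smul hPQ, Measure.inv_le_rnDeriv_of_le_smul hQP,
    P.rnDeriv_lt_top Q] with x hle hge hfin
  rw [← ENNReal.ofReal_inv_of_pos hc] at hge
  exact ⟨(ENNReal.ofReal_le_iff_le_toReal hfin.ne).1 hge,
    ENNReal.toReal_le_of_le_ofReal hc.le hle⟩

end

lemma le_sq_of_chord_bound {ε D : ℝ} (hε : 0 ≤ ε) (hD : D ≤ ε)
    (h : (exp ε - (exp ε)⁻¹) * D ≤
      (exp ε - 1) * ((exp ε)⁻¹ * -ε) + (1 - (exp ε)⁻¹) * (exp ε * ε)) :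
    D ≤ ε ^ 2 := by
  rcases hε.eq_or_lt with rfl | hε
  · simpa using hD
  set c := exp ε with hc
  have hc0 : 0 < c := exp_pos ε
  have hc1 : 1 < c := one_lt_exp_iff.2 hε
  have hcε : c - 1 ≤ ε * c := by
    have h1 : 1 - ε ≤ c⁻¹ := by rw [hc, ← exp_neg]; linarith [add_one_le_exp (-ε)]
    have := mul_le_mul_of_nonneg_right h1 hc0.le
    rw [inv_mul_cancel₀ hc0.ne'] at this
    linarith
  have hD' : (c + 1) * D ≤ ε * (c - 1) := by
    field_simp at h
    nlinarith
  nlinarith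

lemma klDiv_le_of_le_smul {Ω : Type*} [MeasurableSpace Ω] {P Q : Measure Ω}
    [IsProbabilityMeasure P] [IsProbabilityMeasure Q] {ε : ℝ} (hε : 0 ≤ ε)
    (hPQ : P ≤ ENNReal.ofReal (exp ε) • Q) (hQP : Q ≤ ENNReal.ofReal (exp ε) • P) :
    klDiv P Q ≤ ENNReal.ofReal (min ε (ε ^ 2)) := by
  have hac : P ≪ Q := Measure.absolutelyContinuous_of_le_smul hPQ
  have hr := toReal_rnDeriv_mem_Icc_of_le_smul (exp_pos ε) hPQ hQP
  have hllr : ∀ᵐ x ∂P, |llr P Q x| ≤ ε := hac.ae_le <| hr.mono fun x ⟨hlo, hhi⟩ ↦ by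
    have hpos := (inv_pos.2 (exp_pos ε)).trans_le hlo
    refine abs_le.2 ⟨?_, ?_⟩
    · simpa [llr] using log_le_log (inv_pos.2 (exp_pos ε)) hlo
    · simpa [llr] using log_le_log hpos hhi
  have hint : Integrable (llr P Q) P :=
    (integrable_const ε).mono' (measurable_llr P Q).aestronglyMeasurable hllr
  have hle : ∫ x, llr P Q x ∂P ≤ ε := by
    simpa using integral_mono_ae hint (integrable_const ε) (hllr.mono fun x hx ↦ (abs_le.1 hx).2)
  have hchord := (convexOn_mul_log.subset (fun x hx ↦ (inv_pos.2 (exp_pos ε)).le.trans hx.1)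
    (convex_Icc _ _)).integral_comp_le_chord hr Measure.integrable_toReal_rnDeriv
    ((integrable_rnDeriv_mul_log_iff hac).2 hint)
  rw [integral_rnDeriv_mul_log hac, Measure.integral_toReal_rnDeriv hac, probReal_univ,
    log_inv, log_exp] at hchord
  rw [klDiv_of_integrable hac hint]
  exact ENNReal.ofReal_le_ofReal (le_min hle (le_sq_of_chord_bound hε hle hchord))

theorem kl_le_of_eps_zero_close {Ω : Type*} [MeasurableSpace Ω]
    (P1 P2 : Measure Ω) [IsProbabilityMeasure P1] [IsProbabilityMeasure P2]
    (ε : ℝ) (hε : 0 ≤ ε)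
    (h12 : ∀ A : Set Ω, MeasurableSet A → P1 A ≤ ENNReal.ofReal (exp ε) * P2 A)
    (h21 : ∀ A : Set Ω, MeasurableSet A → P2 A ≤ ENNReal.ofReal (exp ε) * P1 A) :
    klDiv P1 P2 ≤ ENNReal.ofReal (min ε (ε ^ 2)) ∧
      klDiv P2 P1 ≤ ENNReal.ofReal (min ε (ε ^ 2)) := by
  have h12' : P1 ≤ ENNReal.ofReal (exp ε) • P2 := Measure.le_iff.2 fun A hA ↦ by
    simpa using h12 A hA
  have h21' : P2 ≤ ENNReal.ofReal (exp ε) • P1 := Measure.le_iff.2 fun A hA ↦ by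
    simpa using h21 A hA
  exact ⟨klDiv_le_of_le_smul hε h12' h21', klDiv_le_of_le_smul hε h21' h12'⟩
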